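/- For every x ∈ Z^3 with x_1 < 0, m̄(x) = −|h| + |m̄(0)|·e^{−γ·(|x_1|−1)}, where m̄(0) denotes the value of m̄ at the origin. -/

import Mathlib

open Real Filter

/-- Points of `ℤ³`. -/
abbrev Z3 : Type := ℤ × ℤ × ℤ

/-- Nearest-neighbor relation `x ∼ y`, i.e. `|x − y| = 1`. -/
def adj (x y : Z3) : Prop :=
  |x.1 - y.1| + |x.2.1 - y.2.1| + |x.2.2 - y.2.2| = 1

instance : DecidableRel adj := fun x y => by unfold adj; infer_instance

/-- The six nearest neighbors of a site. -/
def nbrs (x : Z3) : Finset Z3 :=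
  {(x.1 + 1, x.2), (x.1 - 1, x.2), (x.1, x.2.1 + 1, x.2.2), (x.1, x.2.1 - 1, x.2.2),
    (x.1, x.2.1, x.2.2 + 1), (x.1, x.2.1, x.2.2 - 1)}

/-- `h_x = h·1_{x₁<0}`. -/
noncomputable def hfun (h : ℝ) (x : Z3) : ℝ := if x.1 < 0 then h else 0

/-- One-step transition probability of simple random walk: `p(x,y) = (1/6)·1_{x∼y}`. -/
noncomputable def pker (x y : Z3) : ℝ := if adj x y then 1 / 6 else 0

/-- `n`-step transition probabilities: `p⁰(x,y) = 1_{x=y}`,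
`p^{n+1}(x,y) = Σ_z pⁿ(x,z)·p(z,y)`. -/
noncomputable def pn : ℕ → Z3 → Z3 → ℝ
  | 0, x, y => if x = y then 1 else 0
  | n + 1, x, y => ∑ z ∈ nbrs y, pn n x z * pker z y

/-- `ω = 6J/(1+6J)`. -/
noncomputable def om (J : ℝ) : ℝ := 6 * J / (1 + 6 * J)

/-- `m̄(x) = Σ_{n≥0} ωⁿ Σ_{y∈ℤ³} pⁿ(x,y)·h_y/(1+6J)`. -/
noncomputable def mbar (J h : ℝ) (x : Z3) : ℝ :=
  ∑' n : ℕ, om J ^ n * ∑' y : Z3, pn n x y * hfun h y / (1 + 6 * J)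

/-- the inverse hyperbolic cosine on `[1, ∞)`: `arccosh y = log (y + √(y² − 1))`. -/
noncomputable def arccosh (y : ℝ) : ℝ := Real.log (y + Real.sqrt (y ^ 2 - 1))

/-- `γ = arccosh(1 + 1/(2J))`, the unique positive solution of `3 = (6J/(1+6J))(2 + cosh γ)`. -/
noncomputable def gam (J : ℝ) : ℝ := arccosh (1 + 1 / (2 * J))

/-!
Writing `P` for the transition operator of the simple random walk and `f = h_x/(1+6J)`, the
series `m̄ = ∑ ωⁿ Pⁿ f` is bounded and satisfies `m̄ = f + ω P m̄`. Since `ω < 1`, this equation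
has at most one bounded solution: the difference `d` of two of them satisfies
`sup |d| ≤ ω sup |d|`. So it suffices to exhibit one bounded solution. Looking for one that
depends only on `x₁` reduces the problem to the recurrence
`g k = c_k + ω (g (k+1) + g (k-1) + 4 g k) / 6`, whose homogeneous solutions are `e^{±γk}`
by the choice of `γ`. On `k < 0` we take the constant `h` plus a decaying exponential, on
`k ≥ 0` a decaying exponential, and match the two across the interface.
-/

open Finset

lemma sum_nbrs {M : Type*} [AddCommMonoid M] (x : Z3) (f : Z3 → M) :
    ∑ z ∈ nbrs x, f z = f (x.1 + 1, x.2) + f (x.1 - 1, x.2) + f (x.1, x.2.1 + 1, x.2.2)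
      + f (x.1, x.2.1 - 1, x.2.2) + f (x.1, x.2.1, x.2.2 + 1) + f (x.1, x.2.1, x.2.2 - 1) := by
  rw [nbrs, sum_insert, sum_insert, sum_insert, sum_insert, sum_insert, sum_singleton]
  · simp only [add_assoc]
  all_goals simp only [mem_insert, mem_singleton, Prod.ext_iff]; omega

lemma card_nbrs (x : Z3) : #(nbrs x) = 6 := by
  rw [card_eq_sum_ones, sum_nbrs]

lemma mem_nbrs_comm {x y : Z3} : x ∈ nbrs y ↔ y ∈ nbrs x := by
  constructor <;>
  · intro h
    simp only [nbrs, mem_insert, mem_singleton] at h ⊢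
    rcases h with rfl | rfl | rfl | rfl | rfl | rfl <;> simp

lemma pker_of_mem_nbrs {y z : Z3} (hz : z ∈ nbrs y) : pker z y = 1 / 6 := by
  simp only [nbrs, mem_insert, mem_singleton] at hz
  rcases hz with rfl | rfl | rfl | rfl | rfl | rfl <;> simp [pker, adj]

lemma abs_sum_nbrs_div_six_le {u : Z3 → ℝ} {B : ℝ} (hu : ∀ z, |u z| ≤ B) (x : Z3) :
    |(∑ z ∈ nbrs x, u z) / 6| ≤ B := by
  have hsum : ∑ z ∈ nbrs x, |u z| ≤ 6 * B := by
    simpa [card_nbrs] using sum_le_card_nsmul (nbrs x) (fun z => |u z|) B fun z _ => hu z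
  rw [abs_div, abs_of_pos (by norm_num : (0 : ℝ) < 6), div_le_iff₀ (by norm_num)]
  linarith [abs_sum_le_sum_abs u (nbrs x)]

lemma pn_succ (n : ℕ) (x y : Z3) : pn (n + 1) x y = (∑ z ∈ nbrs y, pn n x z) / 6 := by
  rw [pn, sum_div]
  refine sum_congr rfl fun z hz => ?_
  rw [pker_of_mem_nbrs hz, mul_one_div]

lemma pn_succ_left (n : ℕ) (x y : Z3) : pn (n + 1) x y = (∑ z ∈ nbrs x, pn n z y) / 6 := by
  induction n generalizing y with
  | zero =>
    rw [pn_succ]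
    simp only [pn, sum_ite_eq, sum_ite_eq', mem_nbrs_comm]
  | succ n ih =>
    rw [pn_succ, sum_congr rfl fun z _ => ih z]
    simp only [pn_succ n _ y, ← sum_div]
    rw [sum_comm]

lemma pn_eq_zero_of_notMem_Icc {n : ℕ} {x y : Z3}
    (hy : y ∉ Icc (x.1 - n, x.2.1 - n, x.2.2 - n) (x.1 + n, x.2.1 + n, x.2.2 + n)) :
    pn n x y = 0 := by
  induction n generalizing y with
  | zero =>
    rw [pn, if_neg]
    rintro rfl
    simp at hy
  | succ n ih =>
    rw [pn_succ, sum_eq_zero fun z hz => ih ?_, zero_div]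
    simp only [nbrs, mem_insert, mem_singleton, Prod.ext_iff] at hz
    simp only [mem_Icc, Prod.le_def] at hy ⊢
    push_cast at hy
    omega

noncomputable def walkAvg (n : ℕ) (f : Z3 → ℝ) (x : Z3) : ℝ := ∑' y, pn n x y * f y

lemma summable_pn_mul (n : ℕ) (x : Z3) (f : Z3 → ℝ) : Summable fun y => pn n x y * f y :=
  summable_of_ne_finset_zero fun _ hy => by rw [pn_eq_zero_of_notMem_Icc hy, zero_mul]

lemma walkAvg_zero (f : Z3 → ℝ) (x : Z3) : walkAvg 0 f x = f x := by
  rw [walkAvg, tsum_eq_single x fun y hy => by simp [pn, Ne.symm hy]]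
  simp [pn]

lemma walkAvg_succ (n : ℕ) (f : Z3 → ℝ) (x : Z3) :
    walkAvg (n + 1) f x = (∑ z ∈ nbrs x, walkAvg n f z) / 6 := by
  simp only [walkAvg, pn_succ_left, sum_div, sum_mul]
  rw [Summable.tsum_finsetSum fun z _ => ?_]
  · simp only [div_mul_eq_mul_div, tsum_div_const]
  · simpa only [div_mul_eq_mul_div] using (summable_pn_mul n z f).div_const 6

lemma abs_walkAvg_le {f : Z3 → ℝ} {C : ℝ} (hf : ∀ y, |f y| ≤ C) (n : ℕ) (x : Z3) :
    |walkAvg n f x| ≤ C := by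
  induction n generalizing x with
  | zero => simpa [walkAvg_zero] using hf x
  | succ n ih => simpa [walkAvg_succ] using abs_sum_nbrs_div_six_le ih x

noncomputable def walkResolvent (ω : ℝ) (f : Z3 → ℝ) (x : Z3) : ℝ :=
  ∑' n, ω ^ n * walkAvg n f x

section Resolvent

variable {ω : ℝ} {f : Z3 → ℝ} {C : ℝ}

lemma norm_pow_mul_walkAvg_le (hω₀ : 0 ≤ ω) (hf : ∀ y, |f y| ≤ C) (x : Z3) (n : ℕ) :
    ‖ω ^ n * walkAvg n f x‖ ≤ ω ^ n * C := by
  rw [Real.norm_eq_abs, abs_mul, abs_of_nonneg (pow_nonneg hω₀ n)]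
  exact mul_le_mul_of_nonneg_left (abs_walkAvg_le hf n x) (pow_nonneg hω₀ n)

lemma summable_pow_mul_walkAvg (hω₀ : 0 ≤ ω) (hω₁ : ω < 1) (hf : ∀ y, |f y| ≤ C) (x : Z3) :
    Summable fun n => ω ^ n * walkAvg n f x :=
  .of_norm_bounded ((summable_geometric_of_lt_one hω₀ hω₁).mul_right C)
    (norm_pow_mul_walkAvg_le hω₀ hf x)

lemma abs_walkResolvent_le (hω₀ : 0 ≤ ω) (hω₁ : ω < 1) (hf : ∀ y, |f y| ≤ C) (x : Z3) :
    |walkResolvent ω f x| ≤ (1 - ω)⁻¹ * C :=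
  tsum_of_norm_bounded ((hasSum_geometric_of_lt_one hω₀ hω₁).mul_right C)
    (norm_pow_mul_walkAvg_le hω₀ hf x)

lemma walkResolvent_eq (hω₀ : 0 ≤ ω) (hω₁ : ω < 1) (hf : ∀ y, |f y| ≤ C) (x : Z3) :
    walkResolvent ω f x = f x + ω * (∑ z ∈ nbrs x, walkResolvent ω f z) / 6 := by
  have hsum := fun z => summable_pow_mul_walkAvg hω₀ hω₁ hf z
  simp only [walkResolvent]
  rw [(hsum x).tsum_eq_zero_add, pow_zero, one_mul, walkAvg_zero, add_right_inj, mul_div_assoc,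
    ← Summable.tsum_finsetSum fun z _ => hsum z, ← tsum_div_const, ← tsum_mul_left]
  refine tsum_congr fun n => ?_
  rw [walkAvg_succ, pow_succ, ← mul_sum]
  ring

end Resolvent

lemma eq_zero_of_eq_mul_sum_nbrs_div_six {ω : ℝ} (hω₀ : 0 ≤ ω) (hω₁ : ω < 1) {d : Z3 → ℝ}
    (hd : ∀ x, d x = ω * (∑ z ∈ nbrs x, d z) / 6) {K : ℝ} (hK : ∀ x, |d x| ≤ K) (x : Z3) :
    d x = 0 := by
  have hpow : ∀ k : ℕ, ∀ x, |d x| ≤ ω ^ k * K := by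
    intro k
    induction k with
    | zero => simpa using hK
    | succ k ih =>
      intro x
      rw [hd, mul_div_assoc, abs_mul, abs_of_nonneg hω₀, pow_succ', mul_assoc]
      exact mul_le_mul_of_nonneg_left (abs_sum_nbrs_div_six_le ih x) hω₀
  have hlim : Tendsto (fun k : ℕ => ω ^ k * K) atTop (nhds 0) := by
    simpa using (tendsto_pow_atTop_nhds_zero_of_lt_one hω₀ hω₁).mul_const K
  exact abs_nonpos_iff.mp (ge_of_tendsto' hlim fun k => hpow k x)

lemma om_nonneg {J : ℝ} (hJ : 0 < J) : 0 ≤ om J := by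
  unfold om; positivity

lemma om_lt_one {J : ℝ} (hJ : 0 < J) : om J < 1 := by
  rw [om, div_lt_one (by linarith)]
  linarith

lemma mbar_eq_walkResolvent (J h : ℝ) :
    mbar J h = walkResolvent (om J) fun y => hfun h y / (1 + 6 * J) := by
  ext x
  simp only [mbar, walkResolvent, walkAvg, mul_div_assoc]

lemma abs_hfun_div_le {J : ℝ} (hJ : 0 < J) (h : ℝ) (y : Z3) :
    |hfun h y / (1 + 6 * J)| ≤ |h| / (1 + 6 * J) := by
  have hpos : (0 : ℝ) < 1 + 6 * J := by linarith
  rw [abs_div, abs_of_pos hpos]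
  refine div_le_div_of_nonneg_right ?_ hpos.le
  unfold hfun
  split_ifs <;> simp

lemma mbar_eq {J : ℝ} (hJ : 0 < J) (h : ℝ) (x : Z3) :
    mbar J h x = hfun h x / (1 + 6 * J) + om J * (∑ z ∈ nbrs x, mbar J h z) / 6 := by
  rw [mbar_eq_walkResolvent]
  exact walkResolvent_eq (om_nonneg hJ) (om_lt_one hJ) (abs_hfun_div_le hJ h) x

lemma abs_mbar_le {J : ℝ} (hJ : 0 < J) (h : ℝ) (x : Z3) :
    |mbar J h x| ≤ (1 - om J)⁻¹ * (|h| / (1 + 6 * J)) := by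
  rw [mbar_eq_walkResolvent]
  exact abs_walkResolvent_le (om_nonneg hJ) (om_lt_one hJ) (abs_hfun_div_le hJ h) x

lemma sum_nbrs_comp_fst (g : ℤ → ℝ) (x : Z3) :
    ∑ z ∈ nbrs x, g z.1 = g (x.1 + 1) + g (x.1 - 1) + 4 * g x.1 := by
  rw [sum_nbrs]
  ring

lemma cosh_gam {J : ℝ} (hJ : 0 < J) : cosh (gam J) = 1 + 1 / (2 * J) :=
  cosh_arcosh (le_add_of_nonneg_right (by positivity))

lemma gam_nonneg {J : ℝ} (hJ : 0 < J) : 0 ≤ gam J :=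
  arcosh_nonneg (le_add_of_nonneg_right (by positivity))

lemma inv_one_add_six_mul_add_om {J : ℝ} (hJ : 0 < J) : 1 / (1 + 6 * J) + om J = 1 := by
  rw [om, ← add_div, div_self (by linarith)]

/-- This is where `γ` enters: `cosh s = 1 + 1/(2J)` is the equation `ω (2 + cosh s) = 3`. -/
lemma om_mul_exp_add_exp_sub {J s : ℝ} (hJ : 0 < J) (hs : cosh s = 1 + 1 / (2 * J)) (a : ℝ) :
    om J * (exp (a + s) + exp (a - s) + 4 * exp a) / 6 = exp a := by
  have hsum : J * (exp s + exp (-s)) = 2 * J + 1 := by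
    rw [cosh_eq] at hs
    field_simp at hs
    linarith
  rw [sub_eq_add_neg, exp_add, exp_add, om]
  field_simp
  linear_combination hsum

lemma eq_recurrence_of_eq_const_add_exp {J s : ℝ} (hJ : 0 < J) (hs : cosh s = 1 + 1 / (2 * J))
    {g : ℤ → ℝ} {c B : ℝ} (hg : ∀ k : ℤ, g k = c + B * exp (s * k)) (k : ℤ) :
    g k = c / (1 + 6 * J) + om J * (g (k + 1) + g (k - 1) + 4 * g k) / 6 := by
  have hexp := om_mul_exp_add_exp_sub hJ hs (s * k)
  have hconst := inv_one_add_six_mul_add_om hJ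
  simp only [hg]
  push_cast
  simp only [mul_add, mul_sub, mul_one]
  linear_combination (-B) * hexp - c * hconst

/-- Chosen so that the two branches of `profile` below agree at both `k = -1` and `k = 0`. -/
noncomputable def edgeCoeff (J h : ℝ) : ℝ := -h / (1 + exp (gam J))

noncomputable def profile (J h : ℝ) (k : ℤ) : ℝ :=
  if k < 0 then h + edgeCoeff J h * exp (gam J * (k + 1)) else -edgeCoeff J h * exp (-gam J * k)

lemma edgeCoeff_mul (J h : ℝ) : edgeCoeff J h * (1 + exp (gam J)) = -h :=
  div_mul_cancel₀ _ (by positivity)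

lemma profile_of_nonpos (J h : ℝ) {k : ℤ} (hk : k ≤ 0) :
    profile J h k = h + edgeCoeff J h * exp (gam J * (k + 1)) := by
  rcases hk.lt_or_eq with hk | rfl
  · rw [profile, if_pos hk]
  · simp only [profile, lt_irrefl, if_false, Int.cast_zero, mul_zero, exp_zero, zero_add,
      mul_one]
    linear_combination -edgeCoeff_mul J h

lemma profile_of_neg_one_le (J h : ℝ) {k : ℤ} (hk : -1 ≤ k) :
    profile J h k = -edgeCoeff J h * exp (-gam J * k) := by
  rcases hk.lt_or_eq with hk | rfl
  · rw [profile, if_neg (by omega)]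
  · simp only [profile, if_pos (by norm_num : (-1 : ℤ) < 0)]
    push_cast
    simp only [neg_add_cancel, mul_zero, exp_zero, mul_one, neg_mul, mul_neg, neg_neg]
    linear_combination edgeCoeff_mul J h

lemma profile_eq {J : ℝ} (hJ : 0 < J) (h : ℝ) (k : ℤ) :
    profile J h k = (if k < 0 then h else 0) / (1 + 6 * J)
      + om J * (profile J h (k + 1) + profile J h (k - 1) + 4 * profile J h k) / 6 := by
  have hγ := cosh_gam hJ
  split_ifs with hk
  · rw [profile_of_nonpos J h (by omega : k + 1 ≤ 0),
      profile_of_nonpos J h (by omega : k - 1 ≤ 0), profile_of_nonpos J h hk.le]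
    refine eq_recurrence_of_eq_const_add_exp hJ hγ
      (g := fun k : ℤ => h + edgeCoeff J h * exp (gam J * (k + 1)))
      (B := edgeCoeff J h * exp (gam J)) (fun k => ?_) k
    rw [mul_add, mul_one, exp_add]
    ring
  · rw [profile_of_neg_one_le J h (by omega : -1 ≤ k + 1),
      profile_of_neg_one_le J h (by omega : -1 ≤ k - 1), profile_of_neg_one_le J h (by omega)]
    refine eq_recurrence_of_eq_const_add_exp hJ (by rwa [cosh_neg])
      (g := fun k : ℤ => -edgeCoeff J h * exp (-gam J * k))
      (c := 0) (B := -edgeCoeff J h) (fun k => ?_) k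
    rw [zero_add]

lemma abs_profile_le {J : ℝ} (hJ : 0 < J) (h : ℝ) (k : ℤ) :
    |profile J h k| ≤ |h| + |edgeCoeff J h| := by
  have hγ := gam_nonneg hJ
  unfold profile
  split_ifs with hk
  · have hexp : exp (gam J * (k + 1)) ≤ 1 :=
      exp_le_one_iff.mpr (mul_nonpos_of_nonneg_of_nonpos hγ (by exact_mod_cast hk))
    calc |h + edgeCoeff J h * exp (gam J * (k + 1))|
        ≤ |h| + |edgeCoeff J h * exp (gam J * (k + 1))| := abs_add_le _ _
      _ = |h| + |edgeCoeff J h| * exp (gam J * (k + 1)) := by rw [abs_mul, abs_exp]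
      _ ≤ |h| + |edgeCoeff J h| :=
          add_le_add_right (mul_le_of_le_one_right (abs_nonneg _) hexp) _
  · have hk₀ : (0 : ℝ) ≤ k := by exact_mod_cast not_lt.mp hk
    have hexp : exp (-gam J * k) ≤ 1 :=
      exp_le_one_iff.mpr (mul_nonpos_of_nonpos_of_nonneg (neg_nonpos.mpr hγ) hk₀)
    rw [abs_mul, abs_neg, abs_exp]
    linarith [mul_le_of_le_one_right (abs_nonneg (edgeCoeff J h)) hexp, abs_nonneg h]

lemma profile_fst_eq {J : ℝ} (hJ : 0 < J) (h : ℝ) (x : Z3) :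
    profile J h x.1 = hfun h x / (1 + 6 * J) + om J * (∑ z ∈ nbrs x, profile J h z.1) / 6 := by
  rw [sum_nbrs_comp_fst (profile J h), hfun]
  exact profile_eq hJ h x.1

lemma mbar_eq_profile {J : ℝ} (hJ : 0 < J) (h : ℝ) (x : Z3) : mbar J h x = profile J h x.1 := by
  have hd : ∀ x, mbar J h x - profile J h x.1
      = om J * (∑ z ∈ nbrs x, (mbar J h z - profile J h z.1)) / 6 := fun x => by
    rw [mbar_eq hJ, profile_fst_eq hJ, sum_sub_distrib]
    ring
  have hbound : ∀ x, |mbar J h x - profile J h x.1|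
      ≤ (1 - om J)⁻¹ * (|h| / (1 + 6 * J)) + (|h| + |edgeCoeff J h|) := fun x =>
    (abs_sub _ _).trans (add_le_add (abs_mbar_le hJ h x) (abs_profile_le hJ h x.1))
  exact sub_eq_zero.mp
    (eq_zero_of_eq_mul_sum_nbrs_div_six (om_nonneg hJ) (om_lt_one hJ) hd hbound x)

theorem statement12 (J h : ℝ) (hJ : 0 < J) (hh : h < 0) :
    ∀ x : Z3, x.1 < 0 →
      mbar J h x =
        -|h| + |mbar J h (0, 0, 0)| * Real.exp (-gam J * ((|x.1| : ℤ) - 1 : ℤ)) := by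
  intro x hx
  have hA : 0 < edgeCoeff J h := div_pos (neg_pos.mpr hh) (by positivity)
  have h0 : mbar J h (0, 0, 0) = -edgeCoeff J h := by
    simp [mbar_eq_profile hJ, profile]
  rw [h0, mbar_eq_profile hJ, profile, if_pos hx, abs_neg, abs_of_pos hA, abs_of_neg hh,
    abs_of_neg hx]
  push_cast
  ring_nf
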